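/- Let c^{(1)},...,c^{(m)} be infinite sequences of commuting variables. Suppose for a fixed index l (occupying two adjacent positions) that Pf[c_r^{(l)} c_s^{(l)}] + Pf[c_s^{(l)} c_r^{(l)}] = 0. Then for any superscript/subscript data, Pf[c_{r_1}^{(l_1)}⋯c_r^{(l)}c_s^{(l)}⋯c_{r_m}^{(l_m)}] + Pf[c_{r_1}^{(l_1)}⋯c_s^{(l)}c_r^{(l)}⋯c_{r_m}^{(l_m)}] = 0. -/

import Mathlib

/-!
Statement 8 (Proposition 4.1(2) of Ikeda–Matsumura, after Kazarian): if for a fixed sequence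
`c^{(l)}` and degrees `r, s` one has `Pf[c_r^{(l)} c_s^{(l)}] + Pf[c_s^{(l)} c_r^{(l)}] = 0`,
then for any surrounding entries
`Pf[c_{r_1}^{(l_1)} ⋯ c_r^{(l)} c_s^{(l)} ⋯ c_{r_m}^{(l_m)}]
 + Pf[c_{r_1}^{(l_1)} ⋯ c_s^{(l)} c_r^{(l)} ⋯ c_{r_m}^{(l_m)}] = 0`.

The multi Schur-Pfaffian is defined by the recursion of Section 4 of the paper; an entry is a
pair (infinite sequence indexed by ℤ, degree).  We state the implication for arbitrary
sequences of elements of an arbitrary commutative ring, which includes the generic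
(polynomial-ring) case. -/

open Finset

noncomputable section

variable {R : Type*} [CommRing R]

/-- The two-entry multi Schur-Pfaffian
`Pf[c_r d_s] = c_r d_s + 2 ∑_{j=1}^{s} (−1)^j c_{r+j} d_{s−j}` (the sum being empty if
`s < 0`). -/
def pf2 (c d : ℤ → R) (r s : ℤ) : R :=
  c r * d s + 2 * ∑ j ∈ range s.toNat, (-1 : R) ^ (j + 1) * c (r + (j + 1)) * d (s - (j + 1))

/-- Auxiliary fuel-based definition of the multi Schur-Pfaffian of a list of entries
(sequence, degree). -/
def pfAux : ℕ → List ((ℤ → R) × ℤ) → R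
  | _, [] => 1
  | _, [e] => e.1 e.2
  | _, [e, f] => pf2 e.1 f.1 e.2 f.2
  | 0, _ => 0
  | n + 1, e :: l =>
    if (l.length + 1) % 2 = 0 then
      -- even length: expand along the first entry
      ∑ j : Fin l.length,
        (-1 : R) ^ (j : ℕ) * pf2 e.1 (l.get j).1 e.2 (l.get j).2 * pfAux n (l.eraseIdx j)
    else
      -- odd length: expand removing one entry at a time
      ∑ j : Fin (l.length + 1),
        (-1 : R) ^ (j : ℕ) * ((e :: l).get j).1 ((e :: l).get j).2
          * pfAux n ((e :: l).eraseIdx j)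

/-- The multi Schur-Pfaffian `Pf[c_{r_1}^{(1)} ⋯ c_{r_m}^{(m)}]` of a list of `m` entries. -/
def pfaffian (L : List ((ℤ → R) × ℤ)) : R := pfAux L.length L

/-! Induction on the number of entries around the swapped pair. Each defining expansion of the
Pfaffian is an alternating sum, over the removal of one entry `x`, of a coefficient depending on
`x` times the Pfaffian of the remaining entries. Removing an entry other than the swapped ones
leaves two lists that again differ by the swap, so the induction hypothesis cancels these terms;
removing one of the swapped entries leaves the same list in both Pfaffians, with opposite signs.
The one expansion that does not fit is the even one with the swapped pair in front: expanding
twice gives `(Pf[c_r c_s] + Pf[c_s c_r]) Pf[M]` plus a double alternating sum that is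
antisymmetric in the two removed entries. -/

namespace List

section AltRemovalSum

variable {α G : Type*} [AddCommGroup G]

/-- `∑ⱼ (-1)ʲ F lⱼ (l.eraseIdx j)`, see `List.altRemovalSum_eq_sum`. -/
def altRemovalSum (F : α → List α → G) : List α → G
  | [] => 0
  | a :: l => F a l - altRemovalSum (fun x l' => F x (a :: l')) l

theorem altRemovalSum_eq_sum (F : α → List α → G) (l : List α) :
    l.altRemovalSum F = ∑ j : Fin l.length, (-1 : ℤ) ^ (j : ℕ) • F l[j] (l.eraseIdx j) := by
  induction l generalizing F with
  | nil => rfl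
  | cons a l ih =>
    simp [altRemovalSum, ih, Fin.sum_univ_succ, pow_succ, sub_eq_add_neg]

theorem altRemovalSum_add (F F' : α → List α → G) (l : List α) :
    l.altRemovalSum (fun x l' => F x l' + F' x l') = l.altRemovalSum F + l.altRemovalSum F' := by
  induction l generalizing F F' with
  | nil => simp [altRemovalSum]
  | cons a l ih => simp only [altRemovalSum, ih]; abel

theorem altRemovalSum_sub (F F' : α → List α → G) (l : List α) :
    l.altRemovalSum (fun x l' => F x l' - F' x l') = l.altRemovalSum F - l.altRemovalSum F' := by
  induction l generalizing F F' with
  | nil => simp [altRemovalSum]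
  | cons a l ih => simp only [altRemovalSum, ih]; abel

theorem map_altRemovalSum {H : Type*} [AddCommGroup H] (f : G →+ H) (F : α → List α → G)
    (l : List α) : f (l.altRemovalSum F) = l.altRemovalSum (fun x l' => f (F x l')) := by
  induction l generalizing F with
  | nil => simp [altRemovalSum]
  | cons a l ih => simp [altRemovalSum, ih]

theorem altRemovalSum_congr {F F' : α → List α → G} {l : List α}
    (h : ∀ x l', l'.length + 1 = l.length → F x l' = F' x l') :
    l.altRemovalSum F = l.altRemovalSum F' := by
  induction l generalizing F F' with
  | nil => rfl
  | cons a l ih =>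
    simp only [altRemovalSum]
    rw [h a l rfl, ih fun x l' hl' => h x (a :: l') (by simp [hl'])]

theorem altRemovalSum_zero (l : List α) : l.altRemovalSum (fun _ _ => (0 : G)) = 0 := by
  induction l with
  | nil => rfl
  | cons a l ih => simp [altRemovalSum, ih]

theorem altRemovalSum_eq_zero {F : α → List α → G} {l : List α}
    (h : ∀ x l', l'.length + 1 = l.length → F x l' = 0) : l.altRemovalSum F = 0 :=
  (altRemovalSum_congr h).trans (altRemovalSum_zero l)

/-- The two terms removing `a` or `b` cancel across the two sums. -/
theorem altRemovalSum_append_swap_add {F : α → List α → G} {a b : α} (X Y : List α)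
    (hF : ∀ x X' Y', X'.length + Y'.length + 1 = X.length + Y.length →
      F x (X' ++ a :: b :: Y') + F x (X' ++ b :: a :: Y') = 0) :
    (X ++ a :: b :: Y).altRemovalSum F + (X ++ b :: a :: Y).altRemovalSum F = 0 := by
  induction X generalizing F with
  | nil =>
    simp only [nil_append, altRemovalSum]
    calc _ = Y.altRemovalSum (fun x l' => F x (a :: b :: l') + F x (b :: a :: l')) := by
          rw [altRemovalSum_add]; abel
      _ = 0 := altRemovalSum_eq_zero fun x l' hl' => hF x [] l' (by simpa using hl')
  | cons e X ih =>
    simp only [cons_append, altRemovalSum]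
    rw [sub_add_sub_comm, hF e X Y (by simp; omega),
      ih (F := fun x l' => F x (e :: l')) fun x X' Y' h => hF x (e :: X') Y' (by simp; omega),
      sub_zero]

theorem altRemovalSum_altRemovalSum_swap_add (F : α → α → List α → G) (l : List α) :
    l.altRemovalSum (fun x l' => l'.altRemovalSum (F x))
      + l.altRemovalSum (fun x l' => l'.altRemovalSum (fun y => F y x)) = 0 := by
  induction l generalizing F with
  | nil => simp [altRemovalSum]
  | cons a l ih =>
    simp only [altRemovalSum, altRemovalSum_sub]
    refine Eq.trans ?_ (ih fun x y l' => F x y (a :: l'))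
    abel

end AltRemovalSum

end List

theorem pfAux_eq_pfaffian {n : ℕ} {L : List ((ℤ → R) × ℤ)} (hL : L.length ≤ n) :
    pfAux n L = pfaffian L := by
  induction n using Nat.strong_induction_on generalizing L with
  | _ n ih =>
    match L, n with
    | [], n | [_], n | [_, _], n => cases n <;> rfl
    | e :: a :: b :: l, n + 1 =>
      unfold pfaffian
      simp only [List.length_cons] at hL ⊢
      rw [pfAux.eq_5 _ _ _ (by simp) (by simp), pfAux.eq_5 _ _ _ (by simp) (by simp)]
      congr! 3 with j
      all_goals
        rw [ih n (by omega), ih (l.length + 2) (by omega)] <;>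
          simp only [List.length_eraseIdx, List.length_cons] <;> split <;> omega

theorem pfaffian_pair (a b : (ℤ → R) × ℤ) : pfaffian [a, b] = pf2 a.1 b.1 a.2 b.2 := rfl

theorem pfaffian_cons_of_odd_length (e : (ℤ → R) × ℤ) {N : List ((ℤ → R) × ℤ)}
    (hN : Odd N.length) :
    pfaffian (e :: N) = N.altRemovalSum (fun x l => pf2 e.1 x.1 e.2 x.2 * pfaffian l) := by
  match N, hN with
  | [], h => simp at h
  | [f], _ => simp [List.altRemovalSum, pfaffian, pfAux]
  | a :: b :: l, hN =>
    show pfAux (l.length + 2 + 1) _ = _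
    rw [pfAux.eq_5 _ _ _ (by simp) (by simp), if_pos (by simp [Nat.odd_iff] at hN ⊢; omega),
      List.altRemovalSum_eq_sum]
    refine Finset.sum_congr rfl fun j _ => ?_
    rw [pfAux_eq_pfaffian (n := l.length + 2) (List.length_eraseIdx_le _ _), zsmul_eq_mul]
    simp [mul_assoc]

theorem pfaffian_of_odd_length {L : List ((ℤ → R) × ℤ)} (hL : Odd L.length) :
    pfaffian L = L.altRemovalSum (fun x l => x.1 x.2 * pfaffian l) := by
  match L, hL with
  | [], h | [_, _], h => simp [Nat.odd_iff] at h
  | [e], _ => simp [List.altRemovalSum, pfaffian, pfAux]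
  | e :: a :: b :: l, hL =>
    show pfAux (l.length + 2 + 1) _ = _
    rw [pfAux.eq_5 _ _ _ (by simp) (by simp), if_neg (by simp [Nat.odd_iff] at hL ⊢; omega),
      List.altRemovalSum_eq_sum]
    refine Finset.sum_congr rfl fun j _ => ?_
    rw [pfAux_eq_pfaffian (n := l.length + 2)
      (List.length_eraseIdx_of_lt (l := e :: a :: b :: l) j.isLt).le, zsmul_eq_mul]
    simp [mul_assoc]

theorem pfaffian_cons_cons (a b : (ℤ → R) × ℤ) {M : List ((ℤ → R) × ℤ)} (hM : Even M.length) :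
    pfaffian (a :: b :: M) = pf2 a.1 b.1 a.2 b.2 * pfaffian M
      - M.altRemovalSum (fun x l => l.altRemovalSum
          (fun y l' => pf2 a.1 x.1 a.2 x.2 * pf2 b.1 y.1 b.2 y.2 * pfaffian l')) := by
  rw [pfaffian_cons_of_odd_length a (by simpa using hM.add_one), List.altRemovalSum]
  congr 1
  refine List.altRemovalSum_congr fun x l hl => ?_
  have hl : Odd l.length := Nat.odd_iff.mpr (by have := Nat.even_iff.mp hM; omega)
  rw [pfaffian_cons_of_odd_length b hl]
  simpa [mul_assoc] using List.map_altRemovalSum (AddMonoidHom.mulLeft (pf2 a.1 x.1 a.2 x.2)) _ l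

theorem pfaffian_cons_cons_add_swap (a b : (ℤ → R) × ℤ) {M : List ((ℤ → R) × ℤ)}
    (hM : Even M.length) :
    pfaffian (a :: b :: M) + pfaffian (b :: a :: M)
      = (pfaffian [a, b] + pfaffian [b, a]) * pfaffian M := by
  rw [pfaffian_cons_cons a b hM, pfaffian_cons_cons b a hM]
  have hD := List.altRemovalSum_altRemovalSum_swap_add
    (fun x y l => pf2 a.1 x.1 a.2 x.2 * pf2 b.1 y.1 b.2 y.2 * pfaffian l) M
  simp_rw [mul_comm (pf2 b.1 _ b.2 _) (pf2 a.1 _ a.2 _)]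
  rw [pfaffian_pair, pfaffian_pair]
  linear_combination -hD

/-- Proposition 4.1(2): antisymmetry in two adjacent entries taken from the same sequence
propagates to all multi Schur-Pfaffians. -/
theorem pfaffian_antisymm (c : ℤ → R) (r s : ℤ)
    (h : pfaffian [(c, r), (c, s)] + pfaffian [(c, s), (c, r)] = 0) :
    ∀ L₁ L₂ : List ((ℤ → R) × ℤ),
      pfaffian (L₁ ++ (c, r) :: (c, s) :: L₂)
        + pfaffian (L₁ ++ (c, s) :: (c, r) :: L₂) = 0 := by
  intro L₁ L₂
  induction hn : L₁.length + L₂.length using Nat.strong_induction_on generalizing L₁ L₂ with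
  | _ n ih =>
    rcases Nat.even_or_odd' n with ⟨k, rfl | rfl⟩
    · rcases L₁ with _ | ⟨e, T⟩
      · rw [List.nil_append, List.nil_append,
          pfaffian_cons_cons_add_swap _ _ ⟨k, by simp at hn; omega⟩, h, zero_mul]
      · have hodd (a b) : Odd (T ++ a :: b :: L₂).length := ⟨k, by simp at hn ⊢; omega⟩
        rw [List.cons_append, List.cons_append, pfaffian_cons_of_odd_length _ (hodd _ _),
          pfaffian_cons_of_odd_length _ (hodd _ _)]
        refine List.altRemovalSum_append_swap_add T L₂ fun x X Y hXY => ?_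
        rw [← mul_add, ih _ (by simp at hn; omega) X Y rfl, mul_zero]
    · have hodd (a b) : Odd (L₁ ++ a :: b :: L₂).length := ⟨k + 1, by simp; omega⟩
      rw [pfaffian_of_odd_length (hodd _ _), pfaffian_of_odd_length (hodd _ _)]
      refine List.altRemovalSum_append_swap_add L₁ L₂ fun x X Y hXY => ?_
      rw [← mul_add, ih _ (by omega) X Y rfl, mul_zero]

end
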